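/- arXiv:1505.07321 — 3 statements merged into one kernel-verified Lean document; each statement's English description precedes it below -/
import Mathlib

section
/- Let a_0, a_1 : ℕ → ℝ and ε_0, ε_1 : ℕ → ℝ be sequences satisfying, for all n ≥ 1 and i ∈ {0,1}, the recurrence a_i(n) = E[a_0(I_n^i)] + E[a_1(n − I_n^i)] + ε_i(n), where I_n^i is a binomial B(n, p_{i0}) random variable. If ε_i(n) = O(n^α) as n → ∞ for some fixed α ∈ ℝ and both i ∈ {0,1}, then as n → ∞: a_i(n) = O(n) if α < 1; a_i(n) = O(n^α) if α > 1; and a_i(n) = O(n log n) if α = 1. -/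
open Filter Asymptotics Real

/-- Expectation of `a` under the binomial distribution `B(n, p)`:
`E[a(I_n)] = Σ_{k=0}^n C(n,k) p^k (1-p)^{n-k} a(k)`. -/
noncomputable def binomExp (p : ℝ) (n : ℕ) (a : ℕ → ℝ) : ℝ :=
  ∑ k ∈ Finset.range (n + 1), (n.choose k : ℝ) * p ^ k * (1 - p) ^ (n - k) * a k

/-!
`|a i n|` is compared with a supersolution `g = K h + M` of the recurrence, i.e. a function with
`E[g(I)] + E[g(n - I)] + |ε i n| ≤ g n` for large `n`. Strong induction gives `|a i n| ≤ g n`: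
the terms `a 0 n` and `a 1 n` on the right carry the weights `r ^ n` and `(1 - r) ^ n`, whose sum
is `< 1` once `n ≥ 2`, so they are absorbed.

The profiles are `h n = n ^ α` for `α > 1`, `h n = n - n ^ β` with `α ≤ β < 1` for `α < 1`, and
`h n = n log n` for `α = 1`. Each gains a term of order `n ^ α`, `n ^ β`, resp. `n` under the
averaging, because by Bernstein's theorem `E[F(I / n)] → F(r)` for continuous `F` on `[0, 1]`,
and `r ^ α + (1 - r) ^ α < 1 < r ^ β + (1 - r) ^ β` and `r log r + (1 - r) log (1 - r) < 0`.
-/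

open Topology Set

section binomExp

variable {p : ℝ} {n : ℕ}

theorem binomExp_add (f g : ℕ → ℝ) :
    binomExp p n (fun k => f k + g k) = binomExp p n f + binomExp p n g := by
  simp only [binomExp, mul_add, Finset.sum_add_distrib]

theorem binomExp_sub (f g : ℕ → ℝ) :
    binomExp p n (fun k => f k - g k) = binomExp p n f - binomExp p n g := by
  simp only [binomExp, mul_sub, Finset.sum_sub_distrib]

theorem binomExp_const_mul (c : ℝ) (f : ℕ → ℝ) :
    binomExp p n (fun k => c * f k) = c * binomExp p n f := by
  simp only [binomExp, Finset.mul_sum]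
  exact Finset.sum_congr rfl fun k _ => by ring

theorem binomExp_div_const (f : ℕ → ℝ) (c : ℝ) :
    binomExp p n (fun k => f k / c) = binomExp p n f / c := by
  simp only [binomExp, Finset.sum_div]
  exact Finset.sum_congr rfl fun k _ => by ring

theorem binomExp_const (c : ℝ) : binomExp p n (fun _ => c) = c := by
  have hsum :
      ∑ k ∈ Finset.range (n + 1), (n.choose k : ℝ) * p ^ k * (1 - p) ^ (n - k) = 1 := by
    have h := (add_pow p (1 - p) n).symm
    rw [add_sub_cancel, one_pow] at h
    exact (Finset.sum_congr rfl fun k _ => by ring).trans h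
  simp only [binomExp, ← Finset.sum_mul, hsum, one_mul]

theorem binomExp_congr {f g : ℕ → ℝ} (h : ∀ k ≤ n, f k = g k) :
    binomExp p n f = binomExp p n g :=
  Finset.sum_congr rfl fun k hk => by rw [h k (Nat.lt_succ_iff.mp (Finset.mem_range.mp hk))]

theorem binomExp_natCast_add_sub :
    binomExp p n (fun k => (k : ℝ)) + binomExp p n (fun k => ((n - k : ℕ) : ℝ)) = n := by
  rw [← binomExp_add, binomExp_congr (g := fun _ => (n : ℝ)) fun k hk => by
    rw [Nat.cast_sub hk]; ring, binomExp_const]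

theorem binomWeight_nonneg (hp : p ∈ Icc 0 1) (k : ℕ) :
    0 ≤ (n.choose k : ℝ) * p ^ k * (1 - p) ^ (n - k) := by
  have := sub_nonneg.2 hp.2
  have := hp.1
  positivity

theorem abs_binomExp_le (hp : p ∈ Icc 0 1) (f : ℕ → ℝ) :
    |binomExp p n f| ≤ binomExp p n (fun k => |f k|) :=
  (Finset.abs_sum_le_sum_abs _ _).trans_eq <| Finset.sum_congr rfl fun k _ => by
    rw [abs_mul, abs_of_nonneg (binomWeight_nonneg hp k)]

theorem binomExp_le_add_of_le_of_ne (hp : p ∈ Icc 0 1) {f g : ℕ → ℝ} {j : ℕ} (hj : j ≤ n)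
    (h : ∀ k ≤ n, k ≠ j → f k ≤ g k) :
    binomExp p n f ≤
      binomExp p n g + n.choose j * p ^ j * (1 - p) ^ (n - j) * (f j - g j) := by
  have hsplit := Finset.add_sum_erase (Finset.range (n + 1))
    (fun k => (n.choose k : ℝ) * p ^ k * (1 - p) ^ (n - k) * (f k - g k))
    (Finset.mem_range.2 (Nat.lt_succ_of_le hj))
  have hrest : ∑ k ∈ (Finset.range (n + 1)).erase j,
      (n.choose k : ℝ) * p ^ k * (1 - p) ^ (n - k) * (f k - g k) ≤ 0 := by
    refine Finset.sum_nonpos fun k hk => mul_nonpos_of_nonneg_of_nonpos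
      (binomWeight_nonneg hp k) (sub_nonpos.2 (h k ?_ (Finset.ne_of_mem_erase hk)))
    exact Nat.lt_succ_iff.mp (Finset.mem_range.mp (Finset.mem_of_mem_erase hk))
  have hdiff : binomExp p n f - binomExp p n g = ∑ k ∈ Finset.range (n + 1),
      (n.choose k : ℝ) * p ^ k * (1 - p) ^ (n - k) * (f k - g k) := by
    simp only [binomExp, ← Finset.sum_sub_distrib, mul_sub]
  linarith

end binomExp

theorem tendsto_binomExp_div {F : ℝ → ℝ} (hF : ContinuousOn F (Icc 0 1)) {x : ℝ}
    (hx : x ∈ Icc 0 1) :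
    Tendsto (fun n : ℕ => binomExp x n (fun k => F (k / n))) atTop (𝓝 (F x)) := by
  let f : C(unitInterval, ℝ) :=
    ⟨fun y => F y, hF.comp_continuous continuous_subtype_val fun y => y.2⟩
  refine (((continuous_eval_const (⟨x, hx⟩ : unitInterval)).tendsto f).comp
    (bernsteinApproximation_uniform f)).congr fun n => ?_
  simp [bernsteinApproximation.apply, bernstein_apply, binomExp, bernstein.z, f,
    Fin.sum_univ_eq_sum_range
      (fun k => (n.choose k : ℝ) * x ^ k * (1 - x) ^ (n - k) * F (k / n))]

theorem tendsto_binomExp_div_add_binomExp_sub_div {F : ℝ → ℝ} (hF : ContinuousOn F (Icc 0 1))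
    {x : ℝ} (hx : x ∈ Icc 0 1) :
    Tendsto (fun n : ℕ => binomExp x n (fun k => F (k / n)) +
      binomExp x n (fun k => F ((n - k : ℕ) / n))) atTop (𝓝 (F x + F (1 - x))) := by
  have hF' : ContinuousOn (fun y => F (1 - y)) (Icc 0 1) :=
    hF.comp (continuousOn_const.sub continuousOn_id) fun y hy =>
      ⟨sub_nonneg.2 hy.2, sub_le_self 1 hy.1⟩
  refine (tendsto_binomExp_div hF hx).add ((tendsto_binomExp_div hF' hx).congr' ?_)
  filter_upwards [eventually_ne_atTop 0] with n hn
  refine binomExp_congr fun k hk => ?_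
  rw [Nat.cast_sub hk, sub_div, div_self (Nat.cast_ne_zero.2 hn)]

theorem div_mul_log_div {x y : ℝ} (hx : 0 < x) (hy : 0 ≤ y) :
    y / x * log (y / x) = (y * log y - log x * y) / x := by
  rcases hy.eq_or_lt with rfl | hy
  · simp
  rw [log_div hy.ne' hx.ne']
  ring

theorem tendsto_binomExp_rpow_add_div {x : ℝ} (hx : x ∈ Icc 0 1) {β : ℝ} (hβ : 0 ≤ β) :
    Tendsto (fun n : ℕ => (binomExp x n (fun k => (k : ℝ) ^ β) +
      binomExp x n (fun k => ((n - k : ℕ) : ℝ) ^ β)) / (n : ℝ) ^ β) atTop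
      (𝓝 (x ^ β + (1 - x) ^ β)) := by
  refine (tendsto_binomExp_div_add_binomExp_sub_div
    (continuous_rpow_const hβ).continuousOn hx).congr' ?_
  filter_upwards [eventually_gt_atTop 0] with n hn
  have hn : (0 : ℝ) < n := Nat.cast_pos.2 hn
  simp only [div_rpow (Nat.cast_nonneg _) hn.le, binomExp_div_const, add_div]

theorem tendsto_binomExp_mul_log_add_sub_div {x : ℝ} (hx : x ∈ Icc 0 1) :
    Tendsto (fun n : ℕ => (binomExp x n (fun k => (k : ℝ) * log k) +
      binomExp x n (fun k => ((n - k : ℕ) : ℝ) * log ((n - k : ℕ) : ℝ)) - n * log n) / n) atTop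
      (𝓝 (x * log x + (1 - x) * log (1 - x))) := by
  refine (tendsto_binomExp_div_add_binomExp_sub_div
    continuous_mul_log.continuousOn hx).congr' ?_
  filter_upwards [eventually_gt_atTop 0] with n hn
  have hn : (0 : ℝ) < n := Nat.cast_pos.2 hn
  have hmean := binomExp_natCast_add_sub (p := x) (n := n)
  simp only [div_mul_log_div hn (Nat.cast_nonneg _), binomExp_div_const, binomExp_sub,
    binomExp_const_mul]
  linear_combination (-log n / n) * hmean

theorem exists_binomExp_rpow_add_le {r : ℝ} (hr : r ∈ Ioo 0 1) {α : ℝ} (hα : 1 < α) :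
    ∃ δ > 0, ∀ᶠ n : ℕ in atTop, binomExp r n (fun k => (k : ℝ) ^ α) +
      binomExp r n (fun k => ((n - k : ℕ) : ℝ) ^ α) + δ * (n : ℝ) ^ α ≤ (n : ℝ) ^ α := by
  have h0 : r ^ α < r := rpow_lt_self_of_lt_one hr.1 hr.2 hα
  have h1 : (1 - r) ^ α < 1 - r :=
    rpow_lt_self_of_lt_one (sub_pos.2 hr.2) (sub_lt_self 1 hr.1) hα
  set δ := (1 - (r ^ α + (1 - r) ^ α)) / 2 with hδ
  refine ⟨δ, by linarith, ?_⟩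
  filter_upwards [(tendsto_binomExp_rpow_add_div (β := α) (Ioo_subset_Icc_self hr)
    (by linarith)).eventually_lt_const (show _ < 1 - δ by linarith), eventually_gt_atTop 0]
    with n hlt hn
  rw [div_lt_iff₀ (rpow_pos_of_pos (Nat.cast_pos.2 hn) α)] at hlt
  linarith

theorem exists_le_binomExp_rpow_add {r : ℝ} (hr : r ∈ Ioo 0 1) {β : ℝ} (hβ0 : 0 < β)
    (hβ1 : β < 1) :
    ∃ δ > 0, ∀ᶠ n : ℕ in atTop, (n : ℝ) ^ β + δ * (n : ℝ) ^ β ≤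
      binomExp r n (fun k => (k : ℝ) ^ β) + binomExp r n (fun k => ((n - k : ℕ) : ℝ) ^ β) := by
  have h0 : r < r ^ β := self_lt_rpow_of_lt_one hr.1 hr.2 hβ1
  have h1 : 1 - r < (1 - r) ^ β :=
    self_lt_rpow_of_lt_one (sub_pos.2 hr.2) (sub_lt_self 1 hr.1) hβ1
  set δ := (r ^ β + (1 - r) ^ β - 1) / 2 with hδ
  refine ⟨δ, by linarith, ?_⟩
  filter_upwards [(tendsto_binomExp_rpow_add_div (Ioo_subset_Icc_self hr)
    hβ0.le).eventually_const_lt (show 1 + δ < _ by linarith), eventually_gt_atTop 0]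
    with n hlt hn
  rw [lt_div_iff₀ (rpow_pos_of_pos (Nat.cast_pos.2 hn) β)] at hlt
  linarith

theorem exists_binomExp_mul_log_add_le {r : ℝ} (hr : r ∈ Ioo 0 1) :
    ∃ δ > 0, ∀ᶠ n : ℕ in atTop, binomExp r n (fun k => (k : ℝ) * log k) +
      binomExp r n (fun k => ((n - k : ℕ) : ℝ) * log ((n - k : ℕ) : ℝ)) + δ * n ≤
      n * log n := by
  have h0 : r * log r < 0 := mul_neg_of_pos_of_neg hr.1 (log_neg hr.1 hr.2)
  have h1 : (1 - r) * log (1 - r) < 0 :=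
    mul_neg_of_pos_of_neg (sub_pos.2 hr.2) (log_neg (sub_pos.2 hr.2) (sub_lt_self 1 hr.1))
  set δ := -(r * log r + (1 - r) * log (1 - r)) / 2 with hδ
  refine ⟨δ, by linarith, ?_⟩
  filter_upwards [(tendsto_binomExp_mul_log_add_sub_div
    (Ioo_subset_Icc_self hr)).eventually_lt_const (show _ < -δ by linarith),
    eventually_gt_atTop 0] with n hlt hn
  rw [div_lt_iff₀ (Nat.cast_pos.2 hn)] at hlt
  linarith

theorem pow_add_one_sub_pow_lt_one {x : ℝ} (hx : x ∈ Ioo 0 1) {n : ℕ} (hn : 2 ≤ n) :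
    x ^ n + (1 - x) ^ n < 1 := by
  have h0 := pow_lt_self_of_lt_one₀ hx.1 hx.2 (by omega : 1 < n)
  have h1 := pow_lt_self_of_lt_one₀ (sub_pos.2 hx.2) (sub_lt_self 1 hx.1) (by omega : 1 < n)
  linarith

theorem exists_one_le_forall_abs_le {ι : Type*} [Finite ι] (a : ι → ℕ → ℝ) (N : ℕ) :
    ∃ M, 1 ≤ M ∧ ∀ i, ∀ n < N, |a i n| ≤ M := by
  obtain ⟨M, hM⟩ := Finite.bddAbove_range fun x : ι × Fin N => |a x.1 x.2|
  exact ⟨max M 1, le_max_right M 1, fun i n hn =>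
    (hM ⟨(i, ⟨n, hn⟩), rfl⟩).trans (le_max_left M 1)⟩

theorem isBigO_one_of_tendsto_atTop {f : ℕ → ℝ} (hf : Tendsto f atTop atTop) :
    (fun _ => (1 : ℝ)) =O[atTop] f :=
  ((isLittleO_one_left_iff ℝ).2 (tendsto_norm_atTop_atTop.comp hf)).isBigO

theorem isBigO_natCast_rpow_rpow {α β : ℝ} (hαβ : α ≤ β) :
    (fun n : ℕ => (n : ℝ) ^ α) =O[atTop] fun n : ℕ => (n : ℝ) ^ β := by
  refine IsBigO.of_bound 1 ?_
  filter_upwards [eventually_ge_atTop 1] with n hn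
  have hn : (1 : ℝ) ≤ n := Nat.one_le_cast.2 hn
  rw [Real.norm_of_nonneg (by positivity), Real.norm_of_nonneg (by positivity), one_mul]
  exact rpow_le_rpow_of_exponent_le hn hαβ

section Recurrence

variable {r : Fin 2 → ℝ} {a ε : Fin 2 → ℕ → ℝ} (hr : ∀ i, r i ∈ Ioo 0 1)
  (hrec : ∀ i n, 1 ≤ n →
    a i n = binomExp (r i) n (a 0) + binomExp (r i) n (fun k => a 1 (n - k)) + ε i n)
include hr hrec

theorem abs_le_of_supersolution {g : ℕ → ℝ} {N : ℕ} (hN : 2 ≤ N)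
    (hg : ∀ i, ∀ n ≥ N,
      binomExp (r i) n g + binomExp (r i) n (fun k => g (n - k)) + |ε i n| ≤ g n)
    (hbase : ∀ i, ∀ n < N, |a i n| ≤ g n) (n : ℕ) (i : Fin 2) : |a i n| ≤ g n := by
  induction n using Nat.strong_induction_on generalizing i with
  | _ n ih =>
  rcases lt_or_ge n N with hn | hn
  · exact hbase i n hn
  set e : Fin 2 → ℝ := fun j => |a j n| - g n
  have step : ∀ j, e j ≤ r j ^ n * e 0 + (1 - r j) ^ n * e 1 := by
    intro j
    have hrj := Ioo_subset_Icc_self (hr j)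
    have h0 : binomExp (r j) n (fun k => |a 0 k|) ≤ binomExp (r j) n g + r j ^ n * e 0 := by
      simpa using binomExp_le_add_of_le_of_ne hrj le_rfl fun k hk hkn =>
        ih k (lt_of_le_of_ne hk hkn) 0
    have h1 : binomExp (r j) n (fun k => |a 1 (n - k)|) ≤
        binomExp (r j) n (fun k => g (n - k)) + (1 - r j) ^ n * e 1 := by
      simpa using binomExp_le_add_of_le_of_ne hrj (Nat.zero_le n) fun k hk hk0 =>
        ih (n - k) (by omega) 1
    have habs : |a j n| ≤ binomExp (r j) n (fun k => |a 0 k|) +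
        binomExp (r j) n (fun k => |a 1 (n - k)|) + |ε j n| := by
      rw [hrec j n (by omega)]
      exact (abs_add_three _ _ _).trans (by
        gcongr <;> exact abs_binomExp_le hrj _)
    linarith [hg j n hn]
  have hs := fun j => pow_add_one_sub_pow_lt_one (hr j) (hN.trans hn)
  have hpos : ∀ j, 0 ≤ r j ^ n ∧ 0 ≤ (1 - r j) ^ n := fun j =>
    ⟨pow_nonneg (hr j).1.le n, pow_nonneg (sub_nonneg.2 (hr j).2.le) n⟩
  have he0 : e 0 ≤ 0 ∧ e 1 ≤ 0 := by
    rcases le_total (e 0) (e 1) with h | h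
    · have := step 1; have := hs 1; have := hpos 1
      constructor <;> nlinarith
    · have := step 0; have := hs 0; have := hpos 0
      constructor <;> nlinarith
  fin_cases i
  · simpa [e, sub_nonpos] using he0.1
  · simpa [e, sub_nonpos] using he0.2

theorem isBigO_add_one_of_binomExp_add_le {h φ : ℕ → ℝ} (hh : ∀ n, 0 ≤ h n) (hφ : ∀ n, 0 ≤ φ n)
    (hT : ∀ i, ∃ δ > 0, ∀ᶠ n in atTop,
      binomExp (r i) n h + binomExp (r i) n (fun k => h (n - k)) + δ * φ n ≤ h n)
    (hφ1 : (fun _ => (1 : ℝ)) =O[atTop] φ) (hεφ : ∀ i, ε i =O[atTop] φ) (i : Fin 2) :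
    a i =O[atTop] fun n => h n + 1 := by
  choose δ hδ hTδ using hT
  obtain ⟨C, hC, hCφ⟩ : ∃ C > 0, ∀ᶠ n in atTop, ∀ j, 1 + |ε j n| ≤ C * φ n := by
    obtain ⟨C, hC, hCw⟩ := (hφ1.add ((hεφ 0).norm_left.add (hεφ 1).norm_left)).exists_pos
    refine ⟨C, hC, hCw.bound.mono fun n hn j => ?_⟩
    rw [norm_of_nonneg (by positivity), norm_of_nonneg (hφ n)] at hn
    simp only [Real.norm_eq_abs] at hn
    fin_cases j <;> simp only [Fin.zero_eta, Fin.mk_one] <;>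
      linarith [abs_nonneg (ε 0 n), abs_nonneg (ε 1 n)]
  obtain ⟨N, hN⟩ := eventually_atTop.1
    ((eventually_all.2 hTδ).and (hCφ.and (eventually_ge_atTop 2)))
  obtain ⟨M, hM1, hM⟩ := exists_one_le_forall_abs_le a N
  set δ₀ := min (δ 0) (δ 1)
  have hδ₀pos : 0 < δ₀ := lt_min (hδ 0) (hδ 1)
  have hδ₀ : ∀ j, δ₀ ≤ δ j := by
    intro j; fin_cases j
    exacts [min_le_left _ _, min_le_right _ _]
  set K := M * C / δ₀ with hK_def
  have hK : 0 ≤ K := div_nonneg (mul_nonneg (by linarith) hC.le) hδ₀pos.le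
  have hbound := abs_le_of_supersolution hr hrec (g := fun n => K * h n + M) (hN N le_rfl).2.2
    (fun j n hn => ?grow) fun j n hn =>
      (hM j n hn).trans (le_add_of_nonneg_left (mul_nonneg hK (hh n)))
  case grow =>
    obtain ⟨hTn, hCn, -⟩ := hN n hn
    have hε : M + |ε j n| ≤ K * (δ j * φ n) := calc
      M + |ε j n| ≤ M * (1 + |ε j n|) := by nlinarith [abs_nonneg (ε j n)]
      _ ≤ M * (C * φ n) := by gcongr; exact hCn j
      _ = K * (δ₀ * φ n) := by rw [hK_def]; field_simp
      _ ≤ K * (δ j * φ n) := by gcongr; exacts [hφ n, hδ₀ j]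
    simp only [binomExp_add, binomExp_const_mul, binomExp_const]
    nlinarith [hTn j]
  refine IsBigO.of_bound (K + M) (Eventually.of_forall fun n => ?_)
  rw [Real.norm_eq_abs, Real.norm_eq_abs, abs_of_nonneg (by linarith [hh n] : 0 ≤ h n + 1)]
  nlinarith [hbound n i, hh n]

theorem isBigO_rpow_of_one_lt {α : ℝ} (hα : 1 < α)
    (hε : ∀ i, ε i =O[atTop] fun n : ℕ => (n : ℝ) ^ α) (i : Fin 2) :
    a i =O[atTop] fun n : ℕ => (n : ℝ) ^ α := by
  have h1 := isBigO_one_of_tendsto_atTop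
    ((tendsto_rpow_atTop (by linarith : 0 < α)).comp tendsto_natCast_atTop_atTop)
  exact (isBigO_add_one_of_binomExp_add_le hr hrec (h := fun n : ℕ => (n : ℝ) ^ α)
    (fun n => by positivity) (fun n => by positivity)
    (fun j => exists_binomExp_rpow_add_le (hr j) hα) h1 hε i).trans
    ((isBigO_refl _ _).add h1)

theorem isBigO_natCast_of_lt_one {α : ℝ} (hα : α < 1)
    (hε : ∀ i, ε i =O[atTop] fun n : ℕ => (n : ℝ) ^ α) (i : Fin 2) :
    a i =O[atTop] fun n : ℕ => (n : ℝ) := by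
  obtain ⟨β, hαβ, hβ0, hβ1⟩ : ∃ β, α ≤ β ∧ 0 < β ∧ β < 1 :=
    ⟨(max α 0 + 1) / 2, by linarith [le_max_left α 0], by linarith [le_max_right α 0],
      by linarith [max_lt hα one_pos]⟩
  have hle : ∀ n : ℕ, (n : ℝ) ^ β ≤ n := by
    intro n
    rcases Nat.eq_zero_or_pos n with rfl | hn
    · simp [zero_rpow hβ0.ne']
    · exact rpow_le_self_of_one_le (Nat.one_le_cast.2 hn) hβ1.le
  have hT : ∀ j, ∃ δ > 0, ∀ᶠ n : ℕ in atTop,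
      binomExp (r j) n (fun k => (k : ℝ) - (k : ℝ) ^ β) +
      binomExp (r j) n (fun k => ((n - k : ℕ) : ℝ) - ((n - k : ℕ) : ℝ) ^ β) +
      δ * (n : ℝ) ^ β ≤ n - (n : ℝ) ^ β := by
    intro j
    obtain ⟨δ, hδ, hev⟩ := exists_le_binomExp_rpow_add (hr j) hβ0 hβ1
    refine ⟨δ, hδ, hev.mono fun n hn => ?_⟩
    rw [binomExp_sub, binomExp_sub]
    linarith [binomExp_natCast_add_sub (p := r j) (n := n)]
  have h1 := isBigO_one_of_tendsto_atTop (tendsto_natCast_atTop_atTop (R := ℝ))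
  refine (isBigO_add_one_of_binomExp_add_le hr hrec
    (h := fun n : ℕ => (n : ℝ) - (n : ℝ) ^ β) (fun n => sub_nonneg.2 (hle n))
    (fun n => by positivity) hT
    (isBigO_one_of_tendsto_atTop ((tendsto_rpow_atTop hβ0).comp tendsto_natCast_atTop_atTop))
    (fun j => (hε j).trans (isBigO_natCast_rpow_rpow hαβ)) i).trans (IsBigO.add ?_ h1)
  refine IsBigO.of_bound 1 (Eventually.of_forall fun n => ?_)
  rw [Real.norm_of_nonneg (sub_nonneg.2 (hle n)), Real.norm_of_nonneg (Nat.cast_nonneg n)]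
  linarith [rpow_nonneg (Nat.cast_nonneg n) β]

theorem isBigO_mul_log_of_isBigO_natCast (hε : ∀ i, ε i =O[atTop] fun n : ℕ => (n : ℝ))
    (i : Fin 2) :
    a i =O[atTop] fun n : ℕ => (n : ℝ) * log n := by
  have hlim : Tendsto (fun n : ℕ => (n : ℝ) * log n) atTop atTop :=
    tendsto_natCast_atTop_atTop.atTop_mul_atTop₀
      (tendsto_log_atTop.comp tendsto_natCast_atTop_atTop)
  exact (isBigO_add_one_of_binomExp_add_le hr hrec (h := fun n : ℕ => (n : ℝ) * log n)
    (fun n => mul_nonneg (Nat.cast_nonneg n) (log_natCast_nonneg n))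
    (fun n => Nat.cast_nonneg n)
    (fun j => exists_binomExp_mul_log_add_le (hr j))
    (isBigO_one_of_tendsto_atTop tendsto_natCast_atTop_atTop) hε i).trans
    ((isBigO_refl _ _).add (isBigO_one_of_tendsto_atTop hlim))

end Recurrence

theorem stmt0_general (p : Fin 2 → Fin 2 → ℝ)
    (hp : ∀ i j, p i j ∈ Set.Ioo (0 : ℝ) 1)
    (a ε : Fin 2 → ℕ → ℝ) (α : ℝ)
    (hrec : ∀ i : Fin 2, ∀ n : ℕ, 1 ≤ n →
      a i n = binomExp (p i 0) n (a 0) + binomExp (p i 0) n (fun k => a 1 (n - k)) + ε i n)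
    (hε : ∀ i : Fin 2, (fun n : ℕ => ε i n) =O[atTop] (fun n : ℕ => (n : ℝ) ^ α)) :
    (α < 1 → ∀ i : Fin 2, (fun n : ℕ => a i n) =O[atTop] (fun n : ℕ => (n : ℝ))) ∧
    (α > 1 → ∀ i : Fin 2, (fun n : ℕ => a i n) =O[atTop] (fun n : ℕ => (n : ℝ) ^ α)) ∧
    (α = 1 → ∀ i : Fin 2, (fun n : ℕ => a i n) =O[atTop]
      (fun n : ℕ => (n : ℝ) * Real.log n)) := by
  have hr : ∀ i, p i 0 ∈ Ioo 0 1 := fun i => hp i 0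
  refine ⟨fun hα => isBigO_natCast_of_lt_one hr hrec hα hε,
    fun hα => isBigO_rpow_of_one_lt hr hrec hα hε, fun hα => ?_⟩
  subst hα
  exact isBigO_mul_log_of_isBigO_natCast hr hrec fun i => by simpa using hε i

theorem stmt0 (p : Fin 2 → Fin 2 → ℝ)
    (hp : ∀ i j, p i j ∈ Set.Ioo (0 : ℝ) 1)
    (hsum : ∀ i, p i 0 + p i 1 = 1)
    (a ε : Fin 2 → ℕ → ℝ) (α : ℝ)
    (hrec : ∀ i : Fin 2, ∀ n : ℕ, 1 ≤ n →
      a i n = binomExp (p i 0) n (a 0) + binomExp (p i 0) n (fun k => a 1 (n - k)) + ε i n)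
    (hε : ∀ i : Fin 2, (fun n : ℕ => ε i n) =O[atTop] (fun n : ℕ => (n : ℝ) ^ α)) :
    (α < 1 → ∀ i : Fin 2, (fun n : ℕ => a i n) =O[atTop] (fun n : ℕ => (n : ℝ))) ∧
    (α > 1 → ∀ i : Fin 2, (fun n : ℕ => a i n) =O[atTop] (fun n : ℕ => (n : ℝ) ^ α)) ∧
    (α = 1 → ∀ i : Fin 2, (fun n : ℕ => a i n) =O[atTop]
      (fun n : ℕ => (n : ℝ) * Real.log n)) :=
  stmt0_general p hp a ε α hrec hε
end

section
/- Let a_0, a_1 : ℕ → ℝ and ε_0, ε_1 : ℕ → ℝ be sequences satisfying, for all n ≥ 1 and i ∈ {0,1}, the recurrence a_i(n) = p_{i0} E[a_0(I_n^i)] + p_{i1} E[a_1(n − I_n^i)] + ε_i(n), where I_n^i is a binomial B(n, p_{i0}) random variable. If ε_i(n) = O(n^α) as n → ∞ for some fixed α ∈ ℝ and both i ∈ {0,1}, then as n → ∞: a_i(n) = O(1) if α < 0; a_i(n) = O(n^α) if α > 0; and a_i(n) = O(log n) if α = 0. -/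
open Filter Asymptotics Real

/-!
Reflecting the second binomial (`n - B(n, p) ∼ B(n, 1 - p)`) puts the recurrence in the form
`a i n = ∑ j, p i j * E[a j (B(n, p i j))] + ε i n`. We compare `a` with a Lyapunov function
`h n = φ (n + 1)` satisfying the drift inequality `∑ j, p i j * E[h (B(n, p i j))] ≤ h n - c n ^ α`
for large `n`: strong induction gives `|a i n| ≤ C h n`. The induction hypothesis covers every term
of the recurrence except those with `k = n`; their total weight `∑ j, p i j ^ (n + 1)` is less
than `1`, so they are absorbed at the index where `|a i n|` is largest.

The drift inequality holds because `B(n, p)` lies below `θ (n + 1)`, `θ = (3 + p) / 4 < 1`, up to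
a probability `O(1 / n)` (Chebyshev), and there `φ` has dropped by a multiple of `n ^ α`:
take `φ x = x ^ α` for `α > 0`, `φ x = 1 + log x` for `α = 0` and `φ x = 2 - x ^ α` for `α < 0`.
-/

open Set

namespace binomExp

open Finset

variable {p : ℝ} {n : ℕ}

lemma weight_nonneg (hp₀ : 0 ≤ p) (hp₁ : p ≤ 1) (k : ℕ) :
    0 ≤ (n.choose k : ℝ) * p ^ k * (1 - p) ^ (n - k) := by
  have : 0 ≤ 1 - p := by linarith
  positivity

lemma add (p : ℝ) (n : ℕ) (f g : ℕ → ℝ) :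
    binomExp p n (fun k => f k + g k) = binomExp p n f + binomExp p n g := by
  simp only [binomExp, mul_add, sum_add_distrib]

lemma const_mul (p : ℝ) (n : ℕ) (c : ℝ) (f : ℕ → ℝ) :
    binomExp p n (fun k => c * f k) = c * binomExp p n f := by
  simp only [binomExp, mul_sum]
  exact sum_congr rfl fun k _ => by ring

lemma const (p : ℝ) (n : ℕ) (c : ℝ) : binomExp p n (fun _ => c) = c := by
  have h := (add_pow p (1 - p) n).symm
  rw [add_sub_cancel, one_pow] at h
  rw [binomExp, ← sum_mul]
  convert one_mul c using 2
  exact (sum_congr rfl fun k _ => by ring).trans h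

lemma mono (hp₀ : 0 ≤ p) (hp₁ : p ≤ 1) {f g : ℕ → ℝ} (hfg : ∀ k ≤ n, f k ≤ g k) :
    binomExp p n f ≤ binomExp p n g :=
  sum_le_sum fun k hk => mul_le_mul_of_nonneg_left (hfg k (mem_range_succ_iff.1 hk))
    (weight_nonneg hp₀ hp₁ k)

lemma variance (p : ℝ) (n : ℕ) :
    binomExp p n (fun k => ((k : ℝ) - n * p) ^ 2) = n * p * (1 - p) := by
  have h := congrArg (Polynomial.eval p) (bernsteinPolynomial.variance ℝ n)
  simp only [Polynomial.eval_finsetSum, Polynomial.eval_mul, Polynomial.eval_pow,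
    Polynomial.eval_sub, Polynomial.eval_X, Polynomial.eval_natCast, Polynomial.eval_one,
    bernsteinPolynomial, nsmul_eq_mul] at h
  rw [← h, binomExp]
  exact sum_congr rfl fun k _ => by ring

lemma reflect (p : ℝ) (n : ℕ) (f : ℕ → ℝ) :
    binomExp p n (fun k => f (n - k)) = binomExp (1 - p) n f := by
  rw [binomExp, ← sum_range_reflect]
  refine sum_congr rfl fun k hk => ?_
  have hk : k ≤ n := mem_range_succ_iff.1 hk
  rw [show n + 1 - 1 - k = n - k by omega, Nat.sub_sub_self hk, Nat.choose_symm hk, sub_sub_cancel]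
  ring

lemma eq_sum_range_add (p : ℝ) (n : ℕ) (f : ℕ → ℝ) :
    binomExp p n f = ∑ k ∈ range n, (n.choose k : ℝ) * p ^ k * (1 - p) ^ (n - k) * f k
      + p ^ n * f n := by
  simp [binomExp, sum_range_succ]

lemma le_add_mul_variance_div_sq (hp₀ : 0 ≤ p) (hp₁ : p ≤ 1) {f : ℕ → ℝ} {r A B : ℝ} (hr : 0 < r)
    (hAB : A ≤ B) (hnear : ∀ k ≤ n, |(k : ℝ) - n * p| < r → f k ≤ A) (hfar : ∀ k ≤ n, f k ≤ B) :
    binomExp p n f ≤ A + (B - A) * (n * p * (1 - p) / r ^ 2) := by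
  calc binomExp p n f ≤ binomExp p n (fun k => A + (B - A) / r ^ 2 * ((k : ℝ) - n * p) ^ 2) := by
        refine mono hp₀ hp₁ fun k hk => ?_
        have hBA : 0 ≤ (B - A) / r ^ 2 := by have := sub_nonneg.2 hAB; positivity
        by_cases hk' : |(k : ℝ) - n * p| < r
        · nlinarith [hnear k hk hk', sq_nonneg ((k : ℝ) - n * p)]
        · have hsq : r ^ 2 ≤ ((k : ℝ) - n * p) ^ 2 := by
            rw [← sq_abs ((k : ℝ) - n * p)]
            exact pow_le_pow_left₀ hr.le (not_lt.1 hk') 2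
          have : B - A ≤ (B - A) / r ^ 2 * ((k : ℝ) - n * p) ^ 2 := by
            rw [div_mul_eq_mul_div, le_div_iff₀ (by positivity)]
            exact mul_le_mul_of_nonneg_left hsq (sub_nonneg.2 hAB)
          linarith [hfar k hk]
    _ = A + (B - A) * (n * p * (1 - p) / r ^ 2) := by
        rw [add, const, const_mul, variance]
        ring

lemma abs_le_add_pow_mul (hp₀ : 0 ≤ p) (hp₁ : p ≤ 1) {f g : ℕ → ℝ}
    (hfg : ∀ k < n, |f k| ≤ g k) :
    |binomExp p n f| ≤ binomExp p n g + p ^ n * (|f n| - g n) := by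
  rw [eq_sum_range_add p n f, eq_sum_range_add p n g]
  have hsum : |∑ k ∈ range n, (n.choose k : ℝ) * p ^ k * (1 - p) ^ (n - k) * f k|
      ≤ ∑ k ∈ range n, (n.choose k : ℝ) * p ^ k * (1 - p) ^ (n - k) * g k := by
    refine (abs_sum_le_sum_abs _ _).trans (sum_le_sum fun k hk => ?_)
    rw [abs_mul, abs_of_nonneg (weight_nonneg hp₀ hp₁ k)]
    exact mul_le_mul_of_nonneg_left (hfg k (mem_range.1 hk)) (weight_nonneg hp₀ hp₁ k)
  have hlast : |p ^ n * f n| = p ^ n * |f n| := by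
    rw [abs_mul, abs_of_nonneg (pow_nonneg hp₀ n)]
  linarith [abs_add_le (∑ k ∈ range n, (n.choose k : ℝ) * p ^ k * (1 - p) ^ (n - k) * f k)
    (p ^ n * f n)]

end binomExp

def HasScalingGain (φ : ℝ → ℝ) (g : ℕ → ℝ) : Prop :=
  ∀ θ ∈ Ioo (0 : ℝ) 1, ∃ c > 0, ∀ᶠ n : ℕ in atTop, c * g n ≤ φ (n + 1) - φ (θ * (n + 1))

lemma eventually_binomExp_le_sub {φ : ℝ → ℝ} (hφ : MonotoneOn φ (Ioi 0)) {g : ℕ → ℝ}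
    (hgain : HasScalingGain φ g) {p : ℝ} (hp : p ∈ Ioo 0 1) :
    ∃ c > 0, ∀ᶠ n : ℕ in atTop, binomExp p n (fun k => φ (k + 1)) ≤ φ (n + 1) - c * g n := by
  obtain ⟨hp₀, hp₁⟩ := hp
  obtain ⟨c, hc, hθ⟩ := hgain ((3 + p) / 4) ⟨by linarith, by linarith⟩
  refine ⟨c / 2, by positivity, ?_⟩
  filter_upwards [hθ, eventually_ge_atTop 1, eventually_ge_atTop ⌈8 * p / (1 - p)⌉₊]
    with n hgain hn₁ hceil
  have hn : (1 : ℝ) ≤ n := by exact_mod_cast hn₁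
  have hn₈ : 8 * p ≤ (1 - p) * n := by
    have := Nat.ceil_le.1 hceil
    rw [div_le_iff₀ (by linarith)] at this
    linarith
  have hmono {x y : ℝ} (hx : 0 < x) (hxy : x ≤ y) : φ x ≤ φ y := hφ hx (hx.trans_le hxy) hxy
  have hAB : φ ((3 + p) / 4 * (n + 1)) ≤ φ (n + 1) := hmono (by positivity) (by nlinarith)
  have hwindow (k : ℕ) (hk : |(k : ℝ) - n * p| < (1 - p) / 2 * n) :
      (k : ℝ) + 1 ≤ (3 + p) / 4 * (n + 1) := by
    nlinarith [lt_of_abs_lt hk, mul_nonneg (sub_nonneg.2 hp₁.le) (sub_nonneg.2 hn)]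
  -- Chebyshev: `B(n, p)` leaves the window `|k - n p| < (1 - p) n / 2` with probability at most
  -- `4 p / ((1 - p) n) ≤ 1 / 2`.
  have hE := binomExp.le_add_mul_variance_div_sq (f := fun k => φ (k + 1)) hp₀.le hp₁.le
    (r := (1 - p) / 2 * n) (by nlinarith) hAB
    (fun k _ hk => hmono (by positivity) (hwindow k hk))
    (fun k hk => hmono (by positivity) (by simpa using hk))
  have htail : n * p * (1 - p) / ((1 - p) / 2 * n) ^ 2 ≤ 1 / 2 := by
    rw [div_le_iff₀ (by nlinarith)]
    nlinarith [mul_le_mul_of_nonneg_left hn₈ (by nlinarith : (0 : ℝ) ≤ (1 - p) * n)]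
  nlinarith [mul_le_mul_of_nonneg_left htail (sub_nonneg.2 hAB)]

section Comparison

variable {ι : Type*} [Fintype ι] {p : ι → ι → ℝ} {a ε : ι → ℕ → ℝ} {h : ℕ → ℝ}

lemma eventually_sum_binomExp_le_sub [Nonempty ι] {φ : ℝ → ℝ}
    (hφ : MonotoneOn φ (Ioi 0)) {g : ℕ → ℝ} (hgain : HasScalingGain φ g)
    {q : ι → ℝ} (hq : ∀ j, q j ∈ Ioo 0 1) (hsum : ∑ j, q j = 1) :
    ∃ c > 0, ∀ᶠ n : ℕ in atTop,
      ∑ j, q j * binomExp (q j) n (fun k => φ (k + 1)) ≤ φ (n + 1) - c * g n := by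
  choose c hc hdrift using fun j => eventually_binomExp_le_sub hφ hgain (hq j)
  refine ⟨∑ j, q j * c j,
    Finset.sum_pos (fun j _ => mul_pos (hq j).1 (hc j)) Finset.univ_nonempty, ?_⟩
  filter_upwards [eventually_all.2 hdrift] with n hn
  calc ∑ j, q j * binomExp (q j) n (fun k => φ (k + 1))
      ≤ ∑ j, q j * (φ (n + 1) - c j * g n) :=
        Finset.sum_le_sum fun j _ => mul_le_mul_of_nonneg_left (hn j) (hq j).1.le
    _ = (∑ j, q j) * φ (n + 1) - (∑ j, q j * c j) * g n := by
        simp only [mul_sub, Finset.sum_sub_distrib, Finset.sum_mul, mul_assoc]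
    _ = φ (n + 1) - (∑ j, q j * c j) * g n := by rw [hsum, one_mul]

lemma abs_le_of_supersolution_s2 (hp : ∀ i j, p i j ∈ Ioo 0 1) (hsum : ∀ i, ∑ j, p i j = 1)
    {n : ℕ} (hn : 1 ≤ n) (hrec : ∀ i, a i n = ∑ j, p i j * binomExp (p i j) n (a j) + ε i n)
    {C : ℝ} (ih : ∀ k < n, ∀ j, |a j k| ≤ C * h k)
    (hsuper : ∀ i, C * ∑ j, p i j * binomExp (p i j) n h + |ε i n| ≤ C * h n) (i : ι) :
    |a i n| ≤ C * h n := by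
  have : Nonempty ι := ⟨i⟩
  obtain ⟨i₀, hi₀⟩ := Finite.exists_max fun j => |a j n|
  have hrow : ∀ i, |a i n| ≤ C * h n + (∑ j, p i j ^ (n + 1)) * (|a i₀ n| - C * h n) := by
    intro i
    have hterm : ∀ j, p i j * |binomExp (p i j) n (a j)|
        ≤ p i j * (C * binomExp (p i j) n h) + p i j ^ (n + 1) * (|a i₀ n| - C * h n) := by
      intro j
      obtain ⟨hp₀, hp₁⟩ := hp i j
      have hE := binomExp.abs_le_add_pow_mul hp₀.le hp₁.le (fun k hk => ih k hk j)
      rw [binomExp.const_mul] at hE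
      have hM : p i j ^ n * (|a j n| - C * h n) ≤ p i j ^ n * (|a i₀ n| - C * h n) :=
        mul_le_mul_of_nonneg_left (by linarith [hi₀ j]) (pow_nonneg hp₀.le n)
      calc p i j * |binomExp (p i j) n (a j)|
          ≤ p i j * (C * binomExp (p i j) n h + p i j ^ n * (|a i₀ n| - C * h n)) :=
            mul_le_mul_of_nonneg_left (by linarith) hp₀.le
        _ = _ := by ring
    calc |a i n| ≤ ∑ j, p i j * |binomExp (p i j) n (a j)| + |ε i n| := by
          rw [hrec i]
          refine (abs_add_le _ _).trans ?_
          gcongr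
          refine (Finset.abs_sum_le_sum_abs _ _).trans_eq (Finset.sum_congr rfl fun j _ => ?_)
          rw [abs_mul, abs_of_pos (hp i j).1]
      _ ≤ ∑ j, (p i j * (C * binomExp (p i j) n h) + p i j ^ (n + 1) * (|a i₀ n| - C * h n))
          + |ε i n| := by gcongr with j; exact hterm j
      _ = C * ∑ j, p i j * binomExp (p i j) n h + |ε i n|
          + (∑ j, p i j ^ (n + 1)) * (|a i₀ n| - C * h n) := by
          rw [Finset.sum_add_distrib, Finset.mul_sum, Finset.sum_mul]
          simp only [mul_left_comm]
          ring
      _ ≤ C * h n + (∑ j, p i j ^ (n + 1)) * (|a i₀ n| - C * h n) := by linarith [hsuper i]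
  have hσ : ∑ j, p i₀ j ^ (n + 1) < 1 := by
    rw [← hsum i₀]
    exact Finset.sum_lt_sum_of_nonempty Finset.univ_nonempty fun j _ =>
      pow_lt_self_of_lt_one₀ (hp i₀ j).1 (hp i₀ j).2 (by omega)
  have hmax : |a i₀ n| ≤ C * h n := by nlinarith [hrow i₀]
  exact (hi₀ i).trans hmax

theorem isBigO_of_binomExp_recurrence (hp : ∀ i j, p i j ∈ Ioo 0 1) (hsum : ∀ i, ∑ j, p i j = 1)
    (hrec : ∀ i n, 1 ≤ n → a i n = ∑ j, p i j * binomExp (p i j) n (a j) + ε i n)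
    (hpos : ∀ n, 0 < h n) {g : ℕ → ℝ} (hg : ∀ n, 0 ≤ g n)
    (hdrift : ∀ i, ∃ c > 0, ∀ᶠ n in atTop, ∑ j, p i j * binomExp (p i j) n h ≤ h n - c * g n)
    (hε : ∀ i, ε i =O[atTop] g) (i : ι) :
    a i =O[atTop] h := by
  choose c hc hdrift using hdrift
  choose K hK using fun i => (hε i).bound
  obtain ⟨N, hN⟩ := eventually_atTop.1
    ((eventually_all.2 hdrift).and ((eventually_all.2 hK).and (eventually_ge_atTop 1)))
  obtain ⟨B₁, hB₁⟩ := (finite_range fun i => K i / c i).bddAbove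
  obtain ⟨B₂, hB₂⟩ := (finite_range fun x : ι × Fin N => |a x.1 x.2| / h x.2).bddAbove
  set C := max 0 (max B₁ B₂)
  have hbound : ∀ n i, |a i n| ≤ C * h n := by
    intro n
    induction n using Nat.strong_induction_on with
    | _ n ih =>
      rcases lt_or_ge n N with hn | hn
      · intro i
        have := (hB₂ ⟨(i, ⟨n, hn⟩), rfl⟩).trans ((le_max_right B₁ B₂).trans (le_max_right 0 _))
        rwa [div_le_iff₀ (hpos n)] at this
      obtain ⟨hdrift, hK, hn₁⟩ := hN n hn
      refine abs_le_of_supersolution_s2 hp hsum hn₁ (fun i => hrec i n hn₁) ih fun i => ?_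
      have hKC : K i ≤ C * c i := by
        have := (hB₁ ⟨i, rfl⟩).trans ((le_max_left B₁ B₂).trans (le_max_right 0 _))
        rwa [div_le_iff₀ (hc i)] at this
      have hε := hK i
      rw [norm_eq_abs, norm_of_nonneg (hg n)] at hε
      nlinarith [mul_le_mul_of_nonneg_left (hdrift i) (le_max_left 0 (max B₁ B₂)),
        mul_le_mul_of_nonneg_right hKC (hg n)]
  refine IsBigO.of_bound C (Eventually.of_forall fun n => ?_)
  rw [norm_eq_abs, norm_of_nonneg (hpos n).le]
  exact hbound n i

theorem isBigO_of_binomExp_recurrence_of_hasScalingGain (hp : ∀ i j, p i j ∈ Ioo 0 1)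
    (hsum : ∀ i, ∑ j, p i j = 1)
    (hrec : ∀ i n, 1 ≤ n → a i n = ∑ j, p i j * binomExp (p i j) n (a j) + ε i n)
    {φ : ℝ → ℝ} (hφ : MonotoneOn φ (Ioi 0)) (hφpos : ∀ n : ℕ, 0 < φ (n + 1))
    {g : ℕ → ℝ} (hg : ∀ n, 0 ≤ g n) (hgain : HasScalingGain φ g)
    (hε : ∀ i, ε i =O[atTop] g) (i : ι) :
    a i =O[atTop] fun n => φ (n + 1) :=
  isBigO_of_binomExp_recurrence hp hsum hrec hφpos hg
    (fun i => have : Nonempty ι := ⟨i⟩; eventually_sum_binomExp_le_sub hφ hgain (hp i) (hsum i))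
    hε i

end Comparison

lemma hasScalingGain_rpow {α : ℝ} (hα : 0 < α) :
    HasScalingGain (fun x => x ^ α) (fun n => (n : ℝ) ^ α) := by
  intro θ hθ
  have hθα := rpow_lt_one hθ.1.le hθ.2 hα
  refine ⟨1 - θ ^ α, sub_pos.2 hθα, Eventually.of_forall fun n => ?_⟩
  have hn : (n : ℝ) ^ α ≤ ((n : ℝ) + 1) ^ α := rpow_le_rpow (by positivity) (by linarith) hα.le
  dsimp only
  rw [mul_rpow hθ.1.le (by positivity)]
  nlinarith

lemma hasScalingGain_two_sub_rpow {α : ℝ} (hα : α < 0) :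
    HasScalingGain (fun x => 2 - x ^ α) (fun n => (n : ℝ) ^ α) := by
  intro θ hθ
  have hθα := one_lt_rpow_of_pos_of_lt_one_of_neg hθ.1 hθ.2 hα
  refine ⟨(θ ^ α - 1) * 2 ^ α, by have := sub_pos.2 hθα; positivity, ?_⟩
  filter_upwards [eventually_ge_atTop 1] with n hn₁
  have hn : (2 : ℝ) ^ α * (n : ℝ) ^ α ≤ ((n : ℝ) + 1) ^ α := by
    rw [← mul_rpow (by norm_num) (by positivity)]
    exact rpow_le_rpow_of_nonpos (by positivity) (by norm_cast; omega) hα.le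
  rw [mul_rpow hθ.1.le (by positivity)]
  nlinarith

lemma hasScalingGain_one_add_log : HasScalingGain (fun x => 1 + log x) (fun _ => 1) := by
  intro θ hθ
  refine ⟨-log θ, neg_pos.2 (log_neg hθ.1 hθ.2), Eventually.of_forall fun n => ?_⟩
  dsimp only
  rw [log_mul hθ.1.ne' (by positivity)]
  linarith

lemma isBigO_natCast_add_one_rpow {α : ℝ} (hα : 0 ≤ α) :
    (fun n : ℕ => ((n : ℝ) + 1) ^ α) =O[atTop] fun n : ℕ => (n : ℝ) ^ α := by
  refine IsBigO.of_bound (2 ^ α) ?_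
  filter_upwards [eventually_ge_atTop 1] with n hn
  rw [norm_of_nonneg (by positivity), norm_of_nonneg (by positivity),
    ← mul_rpow (by norm_num) (by positivity)]
  exact rpow_le_rpow (by positivity) (by norm_cast; omega) hα

lemma isBigO_two_sub_natCast_add_one_rpow {α : ℝ} (hα : α ≤ 0) :
    (fun n : ℕ => 2 - ((n : ℝ) + 1) ^ α) =O[atTop] fun _ : ℕ => (1 : ℝ) := by
  refine IsBigO.of_bound 2 (Eventually.of_forall fun n => ?_)
  have : ((n : ℝ) + 1) ^ α ≤ 1 :=
    rpow_le_one_of_one_le_of_nonpos (by linarith [n.cast_nonneg (α := ℝ)]) hα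
  rw [norm_one, mul_one, norm_of_nonneg (by linarith)]
  linarith [rpow_nonneg (by positivity : (0 : ℝ) ≤ n + 1) α]

lemma isBigO_one_add_log_natCast_add_one :
    (fun n : ℕ => 1 + log ((n : ℝ) + 1)) =O[atTop] fun n : ℕ => log n := by
  refine IsBigO.of_bound 3 ?_
  filter_upwards [eventually_ge_atTop 3] with n hn₃
  have hn : (3 : ℝ) ≤ n := by exact_mod_cast hn₃
  have hlog : 1 ≤ log n := by
    rw [le_log_iff_exp_le (by linarith)]
    linarith [exp_one_lt_d9]
  have hlog' : log ((n : ℝ) + 1) ≤ 2 * log n := by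
    rw [← log_rpow (by linarith)]
    exact log_le_log (by linarith) (by norm_num; nlinarith)
  rw [norm_of_nonneg (by linarith [log_nonneg (by linarith : (1 : ℝ) ≤ n + 1)]),
    norm_of_nonneg (by linarith)]
  linarith

theorem stmt2 (p : Fin 2 → Fin 2 → ℝ)
    (hp : ∀ i j, p i j ∈ Set.Ioo (0 : ℝ) 1)
    (hsum : ∀ i, p i 0 + p i 1 = 1)
    (a ε : Fin 2 → ℕ → ℝ) (α : ℝ)
    (hrec : ∀ i : Fin 2, ∀ n : ℕ, 1 ≤ n →
      a i n = p i 0 * binomExp (p i 0) n (a 0)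
        + p i 1 * binomExp (p i 0) n (fun k => a 1 (n - k)) + ε i n)
    (hε : ∀ i : Fin 2, (fun n : ℕ => ε i n) =O[atTop] (fun n : ℕ => (n : ℝ) ^ α)) :
    (α < 0 → ∀ i : Fin 2, (fun n : ℕ => a i n) =O[atTop] (fun _ : ℕ => (1 : ℝ))) ∧
    (α > 0 → ∀ i : Fin 2, (fun n : ℕ => a i n) =O[atTop] (fun n : ℕ => (n : ℝ) ^ α)) ∧
    (α = 0 → ∀ i : Fin 2, (fun n : ℕ => a i n) =O[atTop] (fun n : ℕ => Real.log n)) := by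
  have hsum' : ∀ i, ∑ j, p i j = 1 := fun i => by rw [Fin.sum_univ_two]; exact hsum i
  have hrec' : ∀ i n, 1 ≤ n → a i n = ∑ j, p i j * binomExp (p i j) n (a j) + ε i n := by
    intro i n hn
    rw [hrec i n hn, Fin.sum_univ_two, binomExp.reflect,
      show 1 - p i 0 = p i 1 by linarith [hsum i]]
  have key {φ : ℝ → ℝ} (hφ : MonotoneOn φ (Ioi 0)) (hφpos : ∀ n : ℕ, 0 < φ (n + 1))
      (hgain : HasScalingGain φ fun n => (n : ℝ) ^ α) (i : Fin 2) :
      (fun n => a i n) =O[atTop] fun n : ℕ => φ (n + 1) :=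
    isBigO_of_binomExp_recurrence_of_hasScalingGain hp hsum' hrec' hφ hφpos
      (fun n => by positivity) hgain hε i
  refine ⟨fun hα i => ?_, fun hα i => ?_, fun hα i => ?_⟩
  · refine (key (φ := fun x => 2 - x ^ α)
      (fun x hx y _ hxy => sub_le_sub_left (rpow_le_rpow_of_nonpos hx hxy hα.le) 2)
      (fun n => ?_) (hasScalingGain_two_sub_rpow hα) i).trans
      (isBigO_two_sub_natCast_add_one_rpow hα.le)
    have : ((n : ℝ) + 1) ^ α ≤ 1 :=
      rpow_le_one_of_one_le_of_nonpos (by linarith [n.cast_nonneg (α := ℝ)]) hα.le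
    linarith
  · exact (key ((monotoneOn_rpow_Ici_of_exponent_nonneg hα.le).mono Ioi_subset_Ici_self)
      (fun n => by positivity) (hasScalingGain_rpow hα) i).trans
      (isBigO_natCast_add_one_rpow hα.le)
  · subst hα
    refine (key (φ := fun x => 1 + log x)
      (fun x hx y _ hxy => add_le_add_right (log_le_log hx hxy) 1)
      (fun n => ?_) (by simpa only [rpow_zero] using hasScalingGain_one_add_log) i).trans
      isBigO_one_add_log_natCast_add_one
    linarith [log_nonneg (by linarith [n.cast_nonneg (α := ℝ)] : (1 : ℝ) ≤ n + 1)]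
end

section
/- Let p ∈ (0,1) and for each n ∈ ℕ let X_{n,p} be a binomial B(n,p) distributed random variable. Then E[log((X_{n,p}+1)/(n+1)) − log p] = O(n^{−1/2}) as n → ∞. -/
open Filter Asymptotics Real
open Finset

lemma one_sub_inv_le_log {x : ℝ} (hx : 0 < x) : 1 - 1/x ≤ Real.log x := by
  have h := Real.log_le_sub_one_of_pos (x := x⁻¹) (by positivity)
  rw [Real.log_inv] at h
  rw [one_div]
  linarith

lemma sum_w (p q : ℝ) (n : ℕ) :
    ∑ k ∈ range (n+1), (n.choose k : ℝ) * p ^ k * q ^ (n-k) = (p+q)^n := by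
  rw [add_pow]
  exact Finset.sum_congr rfl fun k _ => by ring

lemma sum_wk (p q : ℝ) (hpq : p + q = 1) (n : ℕ) :
    ∑ k ∈ range (n+1), (n.choose k : ℝ) * p ^ k * q ^ (n-k) * k = n * p := by
  cases n with
  | zero => simp
  | succ n =>
    rw [Finset.sum_range_succ']
    simp only [Nat.cast_zero, mul_zero, add_zero, Nat.succ_sub_succ]
    have h : ∀ j, ((n+1).choose (j+1) : ℝ) * p ^ (j+1) * q ^ (n-j) * (j+1 : ℕ)
        = ((n+1) * p) * ((n.choose j : ℝ) * p ^ j * q ^ (n-j)) := by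
      intro j
      have hc : ((n+1 : ℕ) : ℝ) * (n.choose j : ℝ) = ((n+1).choose (j+1) : ℝ) * ((j+1 : ℕ) : ℝ) := by
        exact_mod_cast congrArg (Nat.cast : ℕ → ℝ) (Nat.add_one_mul_choose_eq n j)
      push_cast at hc ⊢
      linear_combination (-(p^(j+1) * q^(n-j))) * hc
    rw [Finset.sum_congr rfl fun j _ => h j, ← Finset.mul_sum, sum_w, hpq, one_pow, mul_one]
    push_cast; ring

lemma sum_winv (p q : ℝ) (hpq : p + q = 1) (hp : p ≠ 0) (n : ℕ) :
    ∑ k ∈ range (n+1), (n.choose k : ℝ) * p ^ k * q ^ (n-k) / (k+1)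
      = (1 - q^(n+1)) / ((n+1) * p) := by
  have hn1 : ((n:ℝ)+1) ≠ 0 := by positivity
  rw [eq_div_iff (by positivity)]
  have h : ∀ k, ((n.choose k : ℝ) * p ^ k * q ^ (n-k) / (k+1)) * (((n:ℝ)+1) * p)
      = ((n+1).choose (k+1) : ℝ) * p ^ (k+1) * q ^ ((n+1)-(k+1)) := by
    intro k
    have hc : ((n+1 : ℕ) : ℝ) * (n.choose k : ℝ) = ((n+1).choose (k+1) : ℝ) * ((k+1 : ℕ) : ℝ) := by
      exact_mod_cast congrArg (Nat.cast : ℕ → ℝ) (Nat.add_one_mul_choose_eq n k)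
    push_cast at hc
    have hk1 : ((k:ℝ)+1) ≠ 0 := by positivity
    rw [Nat.succ_sub_succ]
    field_simp
    linear_combination (p^(k+1) * q^(n-k)) * hc
  rw [Finset.sum_mul, Finset.sum_congr rfl fun k _ => h k]
  have := Finset.sum_range_succ' (fun j => ((n+1).choose j : ℝ) * p ^ j * q ^ ((n+1)-j)) (n+1)
  rw [sum_w p q (n+1), hpq, one_pow] at this
  simp only [Nat.choose_zero_right, Nat.cast_one, pow_zero, Nat.sub_zero, one_mul, mul_one] at this
  linarith [this]


lemma binom_bounds (p : ℝ) (hp0 : 0 < p) (hp1 : p < 1) (n : ℕ) :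
    binomExp p n (fun k => Real.log (((k : ℝ) + 1) / ((n : ℝ) + 1)) - Real.log p)
      ∈ Set.Icc (0 : ℝ) ((1 - p) / (((n:ℝ)+1) * p)) := by
  set q := 1 - p with hq
  have hpq : p + q = 1 := by ring
  have hq0 : 0 < q := by simp [hq]; linarith
  have hn1 : (0:ℝ) < (n:ℝ) + 1 := by positivity
  set c := ((n:ℝ)+1) * p with hc
  have hc0 : 0 < c := by positivity
  -- rewrite a k as log ((k+1)/c)
  have ha : ∀ k : ℕ, Real.log (((k : ℝ) + 1) / ((n : ℝ) + 1)) - Real.log p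
      = Real.log (((k:ℝ)+1) / c) := by
    intro k
    have hk1 : (0:ℝ) < (k:ℝ)+1 := by positivity
    rw [Real.log_div (by positivity) (by positivity), Real.log_div (by positivity) (by positivity),
      hc, Real.log_mul (by positivity) (by positivity)]
    ring
  have hw : ∀ k, (0:ℝ) ≤ (n.choose k : ℝ) * p ^ k * q ^ (n-k) := by
    intro k; positivity
  have h1 := sum_w p q n
  rw [hpq, one_pow] at h1
  have h2 := sum_wk p q hpq n
  have h3 := sum_winv p q hpq hp0.ne' n
  constructor
  · -- lower bound : binomExp ≥ q^(n+1) ≥ 0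
    have hle : ∑ k ∈ range (n+1), (n.choose k : ℝ) * p ^ k * q ^ (n-k) * (1 - c/((k:ℝ)+1))
        ≤ binomExp p n (fun k => Real.log (((k : ℝ) + 1) / ((n : ℝ) + 1)) - Real.log p) := by
      apply Finset.sum_le_sum
      intro k _
      apply mul_le_mul_of_nonneg_left _ (hw k)
      dsimp only
      rw [ha k]
      have hk1 : (0:ℝ) < (k:ℝ)+1 := by positivity
      have := one_sub_inv_le_log (x := ((k:ℝ)+1)/c) (by positivity)
      rw [one_div_div] at this
      calc 1 - c/((k:ℝ)+1) = 1 - c/((k:ℝ)+1) := rfl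
        _ ≤ Real.log (((k:ℝ)+1)/c) := this
    refine le_trans ?_ hle
    have heq : ∀ k : ℕ, (n.choose k : ℝ) * p ^ k * q ^ (n-k) * (1 - c/((k:ℝ)+1))
        = (n.choose k : ℝ) * p ^ k * q ^ (n-k)
          - c * ((n.choose k : ℝ) * p ^ k * q ^ (n-k) / ((k:ℝ)+1)) := by
      intro k; ring
    rw [Finset.sum_congr rfl fun k _ => heq k, Finset.sum_sub_distrib, ← Finset.mul_sum,
      h1, h3, hc]
    rw [mul_div_cancel₀ _ (by positivity)]
    have : (0:ℝ) ≤ q^(n+1) := by positivity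
    linarith
  · -- upper bound
    have hge : binomExp p n (fun k => Real.log (((k : ℝ) + 1) / ((n : ℝ) + 1)) - Real.log p)
        ≤ ∑ k ∈ range (n+1), (n.choose k : ℝ) * p ^ k * q ^ (n-k) * (((k:ℝ)+1)/c - 1) := by
      apply Finset.sum_le_sum
      intro k _
      apply mul_le_mul_of_nonneg_left _ (hw k)
      dsimp only
      rw [ha k]
      exact Real.log_le_sub_one_of_pos (by positivity)
    refine le_trans hge ?_
    have heq : ∀ k : ℕ, (n.choose k : ℝ) * p ^ k * q ^ (n-k) * (((k:ℝ)+1)/c - 1)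
        = ((n.choose k : ℝ) * p ^ k * q ^ (n-k) * (k:ℝ)) * (1/c)
          + ((n.choose k : ℝ) * p ^ k * q ^ (n-k)) * (1/c)
          - (n.choose k : ℝ) * p ^ k * q ^ (n-k) := by
      intro k; ring
    rw [Finset.sum_congr rfl fun k _ => heq k, Finset.sum_sub_distrib, Finset.sum_add_distrib,
      ← Finset.sum_mul, ← Finset.sum_mul, h1, h2]
    rw [hc]
    rw [le_div_iff₀ (by positivity), hq]
    field_simp
    ring_nf
    nlinarith [hn1, hp0]

theorem stmt15 (p : ℝ) (hp : p ∈ Set.Ioo (0 : ℝ) 1) :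
    (fun n : ℕ =>
        binomExp p n (fun k => Real.log (((k : ℝ) + 1) / ((n : ℝ) + 1)) - Real.log p))
      =O[atTop] (fun n : ℕ => (n : ℝ) ^ (-(1 : ℝ) / 2)) := by
  obtain ⟨hp0, hp1⟩ := hp
  rw [isBigO_iff]
  refine ⟨(1 - p) / p, ?_⟩
  filter_upwards [eventually_ge_atTop 1] with n hn
  obtain ⟨hlo, hhi⟩ := binom_bounds p hp0 hp1 n
  have hn1 : (1:ℝ) ≤ (n:ℝ) := by exact_mod_cast hn
  have hn0 : (0:ℝ) < (n:ℝ) := by linarith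
  have habs : |binomExp p n (fun k => Real.log (((k : ℝ) + 1) / ((n : ℝ) + 1)) - Real.log p)|
      ≤ (1 - p) / (((n:ℝ)+1) * p) := by
    rw [abs_le]
    constructor
    · refine le_trans ?_ hlo
      have : (0:ℝ) ≤ (1 - p) / (((n:ℝ)+1) * p) := div_nonneg (by linarith) (by positivity)
      linarith
    · exact hhi
  have hstep1 : (1 - p) / (((n:ℝ)+1) * p) ≤ (1 - p) / ((n:ℝ) * p) := by
    gcongr <;> linarith
  have hstep2 : (1 - p) / ((n:ℝ) * p) = (1 - p) / p * (n:ℝ) ^ ((-1 : ℝ)) := by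
    rw [Real.rpow_neg_one, ← div_eq_mul_inv, div_div, mul_comm p (n:ℝ)]
  have hstep3 : (n:ℝ) ^ ((-1:ℝ)) ≤ (n:ℝ) ^ (-(1:ℝ)/2) :=
    Real.rpow_le_rpow_of_exponent_le hn1 (by norm_num)
  have hgn : ‖(n:ℝ) ^ (-(1:ℝ)/2)‖ = (n:ℝ) ^ (-(1:ℝ)/2) := by
    rw [Real.norm_eq_abs, abs_of_nonneg (Real.rpow_nonneg hn0.le _)]
  rw [Real.norm_eq_abs, hgn]
  have hc : (0:ℝ) ≤ (1 - p) / p := div_nonneg (by linarith) hp0.le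
  calc |binomExp p n (fun k => Real.log (((k : ℝ) + 1) / ((n : ℝ) + 1)) - Real.log p)|
      ≤ (1 - p) / (((n:ℝ)+1) * p) := habs
    _ ≤ (1 - p) / ((n:ℝ) * p) := hstep1
    _ = (1 - p) / p * (n:ℝ) ^ ((-1:ℝ)) := hstep2
    _ ≤ (1 - p) / p * (n:ℝ) ^ (-(1:ℝ)/2) := by
        exact mul_le_mul_of_nonneg_left hstep3 hc
end
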